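/- arXiv:1209.2740 — 2 statements merged into one kernel-verified Lean document; each statement's English description precedes it below -/
import Mathlib

section
/- Let τ, δ be real numbers with 0 < δ ≤ τ, and define K₋(α) = sin(πδα)·sin(π(2τ−δ)α)/(π²δα²) for α ≠ 0 (extended continuously at α = 0). Then for every real number t, one has U_{τ−δ}(t) ≤ ∫_{-∞}^{∞} e(αt) K₋(α) dα ≤ U_τ(t), where U_a denotes the indicator function of the interval (−a, a) and e(z) = e^{2πiz}. -/
/-!
K₋ is the Fourier transform of the trapezoid `(tent τ - tent (τ - δ)) / δ`, where
`tent a t = max (a - |t|) 0` has Fourier transform `(1 - cos (2πaα)) / (2π²α²)`; the difference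
of the two cosines is the product of sines in K₋. The trapezoid is continuous with compact
support and K₋ = O((1 + α²)⁻¹) is integrable, so Fourier inversion evaluates the integral as the
trapezoid at `t`, which equals 1 for `|t| ≤ τ - δ`, vanishes for `|t| ≥ τ` and lies in `[0, 1]`.
-/

open Real MeasureTheory Set
open scoped FourierTransform

noncomputable def tent (a t : ℝ) : ℝ := max (a - |t|) 0

lemma continuous_tent (a : ℝ) : Continuous (tent a) := by
  unfold tent; fun_prop

lemma tent_neg (a t : ℝ) : tent a (-t) = tent a t := by
  simp [tent]

lemma tent_of_abs_le {a t : ℝ} (h : |t| ≤ a) : tent a t = a - |t| :=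
  max_eq_left (by linarith)

lemma tent_of_le_abs {a t : ℝ} (h : a ≤ |t|) : tent a t = 0 :=
  max_eq_right (by linarith)

lemma tent_le_tent {a b : ℝ} (hab : b ≤ a) (t : ℝ) : tent b t ≤ tent a t :=
  max_le_max (by linarith) le_rfl

lemma tent_sub_tent_le {a b : ℝ} (hab : b ≤ a) (t : ℝ) : tent a t - tent b t ≤ a - b := by
  unfold tent
  have := le_max_left (b - |t|) 0
  have := le_max_right (b - |t|) 0
  exact sub_le_iff_le_add.2 (max_le (by linarith) (by linarith))

lemma hasCompactSupport_tent (a : ℝ) : HasCompactSupport (tent a) :=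
  HasCompactSupport.intro (isCompact_closedBall 0 |a|) fun t ht ↦ tent_of_le_abs <| by
    simp only [Metric.mem_closedBall, dist_zero_right, norm_eq_abs, not_le] at ht
    linarith [le_abs_self a]

lemma integral_tent_mul_cos {a b : ℝ} (ha : 0 ≤ a) (hb : b ≠ 0) :
    ∫ t, tent a t * cos (b * t) = 2 * (1 - cos (b * a)) / b ^ 2 := by
  set g : ℝ → ℝ := fun t ↦ tent a t * cos (b * t)
  have hg_abs : ∀ t, g |t| = g t := by
    intro t
    rcases abs_choice t with h | h <;> simp [g, h, tent_neg, cos_neg]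
  have hg_Ioi : ∫ t in Ioi 0, g t = ∫ t in 0..a, (a - t) * cos (b * t) := by
    rw [setIntegral_eq_of_subset_of_forall_sdiff_eq_zero measurableSet_Ioi Ioc_subset_Ioi_self,
      intervalIntegral.integral_of_le ha]
    · refine setIntegral_congr_fun measurableSet_Ioc fun t ht ↦ ?_
      simp only [g, tent_of_abs_le (abs_le.2 ⟨by linarith [ht.1], ht.2⟩), abs_of_pos ht.1]
    · intro t ⟨ht0, hta⟩
      simp only [mem_Ioc, not_and, not_le] at hta
      simp only [g, tent_of_le_abs (le_abs.2 (Or.inl (hta ht0).le)), zero_mul]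
  have hderiv : ∀ t ∈ uIcc 0 a, HasDerivAt (fun t ↦ (a - t) * sin (b * t) / b - cos (b * t) / b ^ 2)
      ((a - t) * cos (b * t)) t := by
    intro t _
    have hbt : HasDerivAt (fun t : ℝ ↦ b * t) b t := by
      simpa using (hasDerivAt_id t).const_mul b
    refine (((((hasDerivAt_id t).const_sub a).mul hbt.sin).div_const b).sub
      (hbt.cos.div_const (b ^ 2))).congr_deriv ?_
    simp only [id]
    field_simp
    ring
  have hint : IntervalIntegrable (fun t ↦ (a - t) * cos (b * t)) volume 0 a :=
    (by fun_prop : Continuous fun t ↦ (a - t) * cos (b * t)).intervalIntegrable 0 a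
  calc ∫ t, g t = ∫ t, g |t| := by simp only [hg_abs]
    _ = 2 * (1 - cos (b * a)) / b ^ 2 := by
      rw [integral_comp_abs, hg_Ioi, intervalIntegral.integral_eq_sub_of_hasDerivAt hderiv hint]
      simp only [sub_self, zero_mul, mul_zero, sin_zero, cos_zero, sub_zero]
      ring

lemma integral_eq_zero_of_odd {G E : Type*} [MeasurableSpace G] [AddGroup G] [MeasurableNeg G]
    [NormedAddCommGroup E] [NormedSpace ℝ E] {μ : Measure G} [μ.IsNegInvariant] {g : G → E}
    (hg : Function.Odd g) : ∫ x, g x ∂μ = 0 := by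
  have : IsAddTorsionFree E := .of_isTorsionFree ℝ E
  simp_rw [← self_eq_neg, ← integral_neg, ← show ∀ x, g (-x) = -g x from hg, integral_neg_eq_self]

lemma fourier_ofReal_of_even {f : ℝ → ℝ} (hf : Integrable f) (hf_even : Function.Even f) (ξ : ℝ) :
    𝓕 (fun t ↦ (f t : ℂ)) ξ = ((∫ t, f t * cos (2 * π * ξ * t) : ℝ) : ℂ) := by
  have hexp : ∀ t : ℝ, Complex.exp (↑(-2 * π * t * ξ) * Complex.I) • (f t : ℂ) =
      ((f t * cos (2 * π * ξ * t) : ℝ) : ℂ) -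
        ((f t * sin (2 * π * ξ * t) : ℝ) : ℂ) * Complex.I := by
    intro t
    rw [smul_eq_mul, Complex.exp_mul_I, ← Complex.ofReal_cos, ← Complex.ofReal_sin,
      show -2 * π * t * ξ = -(2 * π * ξ * t) by ring, cos_neg, sin_neg]
    push_cast
    ring
  have hcos : Integrable fun t ↦ f t * cos (2 * π * ξ * t) :=
    hf.mul_bdd (by fun_prop) (ae_of_all _ fun t ↦ by simpa using abs_cos_le_one _)
  have hsin : Integrable fun t ↦ f t * sin (2 * π * ξ * t) :=
    hf.mul_bdd (by fun_prop) (ae_of_all _ fun t ↦ by simpa using abs_sin_le_one _)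
  have hodd : ∫ t, f t * sin (2 * π * ξ * t) = 0 :=
    integral_eq_zero_of_odd fun t ↦ by
      rw [hf_even t, show 2 * π * ξ * -t = -(2 * π * ξ * t) by ring, sin_neg, mul_neg]
  rw [Real.fourier_real_eq_integral_exp_smul]
  simp only [hexp]
  rw [integral_sub hcos.ofReal (hsin.ofReal.mul_const _), integral_mul_const,
    integral_complex_ofReal, integral_complex_ofReal, hodd]
  simp

noncomputable def trapezoid (τ δ t : ℝ) : ℝ := (tent τ t - tent (τ - δ) t) / δ

lemma continuous_trapezoid (τ δ : ℝ) : Continuous (trapezoid τ δ) := by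
  unfold trapezoid
  have := continuous_tent τ
  have := continuous_tent (τ - δ)
  fun_prop

lemma trapezoid_neg (τ δ t : ℝ) : trapezoid τ δ (-t) = trapezoid τ δ t := by
  simp only [trapezoid, tent_neg]

lemma trapezoid_of_le_abs {τ δ t : ℝ} (hδ : 0 ≤ δ) (h : τ ≤ |t|) : trapezoid τ δ t = 0 := by
  rw [trapezoid, tent_of_le_abs h, tent_of_le_abs (by linarith), sub_zero, zero_div]

lemma trapezoid_of_abs_le {τ δ t : ℝ} (hδ : 0 < δ) (h : |t| ≤ τ - δ) : trapezoid τ δ t = 1 := by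
  rw [trapezoid, tent_of_abs_le h, tent_of_abs_le (by linarith),
    show τ - |t| - (τ - δ - |t|) = δ by ring, div_self hδ.ne']

lemma trapezoid_nonneg {τ δ : ℝ} (hδ : 0 ≤ δ) (t : ℝ) : 0 ≤ trapezoid τ δ t :=
  div_nonneg (sub_nonneg.2 (tent_le_tent (by linarith) t)) hδ

lemma trapezoid_le_one {τ δ : ℝ} (hδ : 0 ≤ δ) (t : ℝ) : trapezoid τ δ t ≤ 1 :=
  div_le_one_of_le₀ ((tent_sub_tent_le (by linarith) t).trans_eq (sub_sub_cancel τ δ)) hδ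

lemma integrable_trapezoid {τ δ : ℝ} (hδ : 0 ≤ δ) : Integrable (trapezoid τ δ) :=
  (continuous_trapezoid τ δ).integrable_of_hasCompactSupport <|
    HasCompactSupport.intro (isCompact_closedBall 0 τ) fun t ht ↦ trapezoid_of_le_abs hδ <| by
      simp only [Metric.mem_closedBall, dist_zero_right, norm_eq_abs, not_le] at ht
      exact ht.le

lemma indicator_Ioo_le_trapezoid {τ δ : ℝ} (hδ : 0 < δ) (t : ℝ) :
    (Ioo (-(τ - δ)) (τ - δ)).indicator (fun _ ↦ (1 : ℝ)) t ≤ trapezoid τ δ t := by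
  by_cases ht : t ∈ Ioo (-(τ - δ)) (τ - δ)
  · rw [indicator_of_mem ht, trapezoid_of_abs_le hδ (abs_lt.2 ht).le]
  · rw [indicator_of_notMem ht]
    exact trapezoid_nonneg hδ.le t

lemma trapezoid_le_indicator_Ioo {τ δ : ℝ} (hδ : 0 ≤ δ) (t : ℝ) :
    trapezoid τ δ t ≤ (Ioo (-τ) τ).indicator (fun _ ↦ (1 : ℝ)) t := by
  by_cases ht : t ∈ Ioo (-τ) τ
  · rw [indicator_of_mem ht]
    exact trapezoid_le_one hδ t
  · rw [indicator_of_notMem ht, trapezoid_of_le_abs hδ (not_lt.1 (mt abs_lt.1 ht))]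

lemma fourier_trapezoid {τ δ : ℝ} (hδ : 0 < δ) (hδτ : δ ≤ τ) {α : ℝ} (hα : α ≠ 0) :
    𝓕 (fun t ↦ (trapezoid τ δ t : ℂ)) α =
      ((sin (π * δ * α) * sin (π * (2 * τ - δ) * α) / (π ^ 2 * δ * α ^ 2) : ℝ) : ℂ) := by
  have hb : 2 * π * α ≠ 0 := by positivity
  have htent (a : ℝ) : Integrable fun t ↦ tent a t * cos (2 * π * α * t) :=
    ((continuous_tent a).mul (by fun_prop)).integrable_of_hasCompactSupport
      (hasCompactSupport_tent a).mul_right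
  have hcos_sub : cos (2 * π * α * (τ - δ)) - cos (2 * π * α * τ) =
      2 * sin (π * δ * α) * sin (π * (2 * τ - δ) * α) := by
    rw [cos_sub_cos, show (2 * π * α * (τ - δ) + 2 * π * α * τ) / 2 = π * (2 * τ - δ) * α by ring,
      show (2 * π * α * (τ - δ) - 2 * π * α * τ) / 2 = -(π * δ * α) by ring, sin_neg]
    ring
  rw [fourier_ofReal_of_even (integrable_trapezoid hδ.le) (trapezoid_neg τ δ)]
  congr 1
  simp only [trapezoid, div_mul_eq_mul_div, sub_mul]
  rw [integral_div, integral_sub (htent τ) (htent (τ - δ)), integral_tent_mul_cos (by linarith) hb,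
    integral_tent_mul_cos (by linarith) hb]
  set s₁ := sin (π * δ * α)
  set s₂ := sin (π * (2 * τ - δ) * α)
  field_simp
  linear_combination hcos_sub

lemma abs_sin_mul_sin_div_le (a b c α : ℝ) :
    |sin (a * α) * sin (b * α) / (c * α ^ 2)| ≤ (|a * b| + 1) / |c| * (1 + α ^ 2)⁻¹ := by
  -- where `c * α ^ 2 = 0` the left side is the junk value `|x / 0| = 0`
  rcases eq_or_ne (c * α ^ 2) 0 with h | h
  · rw [h, div_zero, abs_zero]
    positivity
  have hc : 0 < |c| := abs_pos.2 (left_ne_zero_of_mul h)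
  have hα : 0 < α ^ 2 := (sq_nonneg α).lt_of_ne (right_ne_zero_of_mul h).symm
  set s := |sin (a * α)| * |sin (b * α)|
  have hs_sq : s ≤ |a * b| * α ^ 2 := by
    calc s ≤ |a * α| * |b * α| :=
          mul_le_mul abs_sin_le_abs abs_sin_le_abs (abs_nonneg _) (abs_nonneg _)
      _ = |a * b| * α ^ 2 := by rw [abs_mul, abs_mul, abs_mul, ← sq_abs α]; ring
  have hs_one : s ≤ 1 := mul_le_one₀ (abs_sin_le_one _) (abs_nonneg _) (abs_sin_le_one _)
  have hrhs : (|a * b| + 1) / |c| * (1 + α ^ 2)⁻¹ * (|c| * α ^ 2) =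
      (|a * b| + 1) * α ^ 2 / (1 + α ^ 2) := by
    field_simp
  rw [abs_div, abs_mul, abs_mul, abs_of_pos hα, div_le_iff₀ (by positivity), hrhs,
    le_div_iff₀ (by positivity)]
  nlinarith

lemma integrable_sin_mul_sin_div_sq (a b c : ℝ) :
    Integrable fun α : ℝ ↦ sin (a * α) * sin (b * α) / (c * α ^ 2) :=
  (integrable_inv_one_add_sq.const_mul _).mono' (by fun_prop : Measurable _).aestronglyMeasurable
    (ae_of_all _ fun α ↦ abs_sin_mul_sin_div_le a b c α)

lemma integral_exp_mul_eq_of_ae_eq_fourier {F K : ℝ → ℂ} (hF_cont : Continuous F)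
    (hF : Integrable F) (hK : Integrable K) (hKF : K =ᵐ[volume] 𝓕 F) (t : ℝ) :
    ∫ α : ℝ, Complex.exp (2 * π * Complex.I * α * t) * K α = F t := by
  calc ∫ α : ℝ, Complex.exp (2 * π * Complex.I * α * t) * K α = 𝓕⁻ K t := by
        rw [Real.fourierInv_eq_fourier_neg, Real.fourier_real_eq_integral_exp_smul]
        congr 1 with α
        rw [smul_eq_mul]
        push_cast
        ring_nf
    _ = 𝓕⁻ (𝓕 F) t := by
        rw [Real.fourierInv_eq_fourier_neg, Real.fourierInv_eq_fourier_neg,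
          Real.fourier_congr_ae hKF]
    _ = F t := by rw [hF_cont.fourierInv_fourier_eq hF (hK.congr hKF)]

theorem stmt_0_general (τ δ : ℝ) (hδ : 0 < δ) (hδτ : δ ≤ τ)
    (Km : ℝ → ℝ)
    (hKm : ∀ α : ℝ, α ≠ 0 →
      Km α = Real.sin (π * δ * α) * Real.sin (π * (2 * τ - δ) * α) / (π ^ 2 * δ * α ^ 2))
    (t : ℝ) :
    Set.indicator (Set.Ioo (-(τ - δ)) (τ - δ)) (fun _ => (1 : ℝ)) t ≤
      (∫ α : ℝ, Complex.exp (2 * π * Complex.I * α * t) * (Km α : ℂ)).re ∧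
    (∫ α : ℝ, Complex.exp (2 * π * Complex.I * α * t) * (Km α : ℂ)).re ≤
      Set.indicator (Set.Ioo (-τ) τ) (fun _ => (1 : ℝ)) t := by
  have hK : Integrable fun α ↦ (Km α : ℂ) := by
    refine ((integrable_sin_mul_sin_div_sq (π * δ) (π * (2 * τ - δ)) (π ^ 2 * δ)).congr ?_).ofReal
    filter_upwards [Measure.ae_ne volume 0] with α hα
    rw [hKm α hα]
  have hKF : (fun α ↦ (Km α : ℂ)) =ᵐ[volume] 𝓕 fun t ↦ (trapezoid τ δ t : ℂ) := by
    filter_upwards [Measure.ae_ne volume 0] with α hα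
    rw [hKm α hα, fourier_trapezoid hδ hδτ hα]
  rw [integral_exp_mul_eq_of_ae_eq_fourier
    (Complex.continuous_ofReal.comp (continuous_trapezoid τ δ))
    (integrable_trapezoid hδ.le).ofReal hK hKF t]
  exact ⟨indicator_Ioo_le_trapezoid hδ t, trapezoid_le_indicator_Ioo hδ.le t⟩

theorem stmt_0 (τ δ : ℝ) (hδ : 0 < δ) (hδτ : δ ≤ τ)
    (Km : ℝ → ℝ) (hKcont : Continuous Km)
    (hKm : ∀ α : ℝ, α ≠ 0 →
      Km α = Real.sin (π * δ * α) * Real.sin (π * (2 * τ - δ) * α) / (π ^ 2 * δ * α ^ 2))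
    (t : ℝ) :
    Set.indicator (Set.Ioo (-(τ - δ)) (τ - δ)) (fun _ => (1 : ℝ)) t ≤
      (∫ α : ℝ, Complex.exp (2 * π * Complex.I * α * t) * (Km α : ℂ)).re ∧
    (∫ α : ℝ, Complex.exp (2 * π * Complex.I * α * t) * (Km α : ℂ)).re ≤
      Set.indicator (Set.Ioo (-τ) τ) (fun _ => (1 : ℝ)) t :=
  stmt_0_general τ δ hδ hδτ Km hKm t
end

section
/- Let k ≥ 2 and let ρ(p^h) denote the number of pairs (x, y) with 1 ≤ x, y ≤ p^h and x^k ≡ y^k (mod p^h), where p is prime and h ≥ 1. Define the multiplicative function w_k by w_k(p^{uk+v}) = k p^{-u-1/2} when v = 1 and w_k(p^{uk+v}) = p^{-u-1} when 2 ≤ v ≤ k (u ≥ 0). Assuming the Gauss sum bound |S_k(p^l, c)| ≤ k p^l w_k(p^l) for all l ≥ 1 and (c, p) = 1, one has ρ(p^h) ≤ k² (h+1) p^{2h} w_k(p^h)². -/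
open Real Finset



lemma ap_count (d n : ℕ) (c : ℤ) (hd : 0 < d) :
    ((Finset.Icc 1 (d*n)).filter (fun t : ℕ => (d:ℤ) ∣ (t:ℤ) - c)).card ≤ n := by
  have : ((Finset.Icc 1 (d*n)).filter (fun t : ℕ => (d:ℤ) ∣ (t:ℤ) - c)).card
      ≤ (Finset.range n).card := by
    apply Finset.card_le_card_of_injOn (fun t => (t-1)/d)
    · intro t ht
      simp only [Finset.mem_coe, Finset.mem_filter, Finset.mem_Icc] at ht
      simp only [Finset.mem_coe, Finset.mem_range]
      rw [Nat.div_lt_iff_lt_mul hd]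
      calc t - 1 < t := by omega
        _ ≤ n * d := by rw [mul_comm]; exact ht.1.2
    · intro t ht t' ht' hq
      simp only [Finset.mem_coe, Finset.mem_filter, Finset.mem_Icc] at ht ht'
      simp only [] at hq
      have h1 := Nat.div_add_mod (t-1) d
      have h2 := Nat.div_add_mod (t'-1) d
      rw [show (t-1)/d = (t'-1)/d from hq] at h1
      have m1 : (t-1) % d < d := Nat.mod_lt _ hd
      have m2 : (t'-1) % d < d := Nat.mod_lt _ hd
      obtain ⟨Q, hQ⟩ : ∃ Q, d * ((t'-1)/d) = Q := ⟨_, rfl⟩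
      rw [hQ] at h1 h2
      have hdvd : (d:ℤ) ∣ (t':ℤ) - t := by
        have h3 := dvd_sub ht'.2 ht.2
        have h4 : ((t':ℤ) - c) - ((t:ℤ) - c) = (t':ℤ) - t := by ring
        rwa [h4] at h3
      have habs : |(t':ℤ) - t| < d := by
        rw [abs_lt]; constructor <;> omega
      have := Int.eq_zero_of_abs_lt_dvd hdvd habs
      omega
  simpa using this



lemma enat_step {l a : ℕ} {E : ℕ∞} (h1 : (l : ℕ∞) ≤ E + (a : ℕ∞)) :
    ((l - a : ℕ) : ℕ∞) ≤ E := by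
  rcases eq_top_or_lt_top E with htop | hfin
  · rw [htop]; exact le_top
  · lift E to ℕ using hfin.ne with E hE
    have : l ≤ E + a := by exact_mod_cast h1
    exact_mod_cast Nat.cast_le.mpr (by omega : l - a ≤ E)

lemma lift_uniq_odd (p k l : ℕ) (hp : p.Prime) (hodd : Odd p) (hk : 1 ≤ k)
    {t t₀ : ℕ} (ht : ¬ p ∣ t)
    (hcong : (p:ℤ) ∣ (t:ℤ) - (t₀:ℤ))
    (hdvd : (p:ℤ)^l ∣ (t:ℤ)^k - (t₀:ℤ)^k) :
    (p:ℤ)^(l - k.factorization p) ∣ (t:ℤ) - (t₀:ℤ) := by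
  haveI : Fact p.Prime := ⟨hp⟩
  have hx : ¬ (p:ℤ) ∣ (t:ℤ) := by exact_mod_cast ht
  have hlte := Int.emultiplicity_pow_sub_pow hp hodd hcong hx k
  have h1 : (l : ℕ∞) ≤ emultiplicity ((p:ℤ)) ((t:ℤ)^k - (t₀:ℤ)^k) :=
    le_emultiplicity_of_pow_dvd hdvd
  rw [hlte] at h1
  have hek : emultiplicity p k = (k.factorization p : ℕ∞) := by
    rw [← padicValNat_eq_emultiplicity (by omega), Nat.factorization_def _ hp]
  rw [hek] at h1
  exact pow_dvd_of_le_emultiplicity (enat_step h1)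

lemma lift_uniq_two (k l : ℕ) (hk : 1 ≤ k)
    {t t₀ : ℕ} (ht : ¬ 2 ∣ t) (ht₀ : ¬ 2 ∣ t₀)
    (hcong : (4:ℤ) ∣ (t:ℤ) - (t₀:ℤ))
    (hdvd : (2:ℤ)^l ∣ (t:ℤ)^k - (t₀:ℤ)^k) :
    (2:ℤ)^(l - k.factorization 2) ∣ (t:ℤ) - (t₀:ℤ) := by
  haveI : Fact (Nat.Prime 2) := ⟨Nat.prime_two⟩
  rcases Nat.even_or_odd k with hke | hko
  · have hx : ¬ (2:ℤ) ∣ (t:ℤ) := by exact_mod_cast ht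
    have hx0 : ¬ (2:ℤ) ∣ (t₀:ℤ) := by exact_mod_cast ht₀
    have h2 : (2:ℤ) ∣ (t:ℤ) - (t₀:ℤ) := dvd_trans (by norm_num : (2:ℤ) ∣ 4) hcong
    have hlte := Int.two_pow_sub_pow h2 hx hke
    have hsum : emultiplicity (2:ℤ) ((t:ℤ) + (t₀:ℤ)) = (1:ℕ) := by
      rw [emultiplicity_eq_coe]
      constructor
      · rw [pow_one]; omega
      · rw [show ((2:ℤ)^(1+1)) = 4 by norm_num]; omega
    have h1 : (l : ℕ∞) ≤ emultiplicity ((2:ℤ)) ((t:ℤ)^k - (t₀:ℤ)^k) :=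
      le_emultiplicity_of_pow_dvd hdvd
    have hek : emultiplicity ((2:ℤ)) ((k:ℕ):ℤ) = (k.factorization 2 : ℕ∞) := by
      have := Int.natCast_emultiplicity 2 k
      push_cast at this
      rw [this, ← padicValNat_eq_emultiplicity (by omega), Nat.factorization_def _ Nat.prime_two]
    have h3 : (l : ℕ∞) + 1 ≤ (1:ℕ∞) + emultiplicity (2:ℤ) ((t:ℤ) - (t₀:ℤ))
        + (k.factorization 2 : ℕ∞) := by
      calc (l : ℕ∞) + 1 ≤ emultiplicity ((2:ℤ)) ((t:ℤ)^k - (t₀:ℤ)^k) + 1 := by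
            exact add_le_add_left h1 1
        _ = emultiplicity (2:ℤ) ((t:ℤ) + (t₀:ℤ)) + emultiplicity (2:ℤ) ((t:ℤ) - (t₀:ℤ))
            + emultiplicity ((2:ℤ)) ((k:ℕ):ℤ) := by rw [hlte]
        _ = (1:ℕ∞) + emultiplicity (2:ℤ) ((t:ℤ) - (t₀:ℤ)) + (k.factorization 2 : ℕ∞) := by
            rw [hsum, hek]; norm_cast
    apply pow_dvd_of_le_emultiplicity
    apply enat_step
    have h4 : (l : ℕ∞) + 1 ≤ (emultiplicity (2:ℤ) ((t:ℤ) - (t₀:ℤ)) + (k.factorization 2 : ℕ∞)) + 1 := by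
      calc (l : ℕ∞) + 1 ≤ (1:ℕ∞) + emultiplicity (2:ℤ) ((t:ℤ) - (t₀:ℤ))
          + (k.factorization 2 : ℕ∞) := h3
        _ = (emultiplicity (2:ℤ) ((t:ℤ) - (t₀:ℤ)) + (k.factorization 2 : ℕ∞)) + 1 := by
          rw [add_comm (1:ℕ∞), add_assoc]; ring_nf
    exact (WithTop.add_le_add_iff_right (by norm_num : (1:ℕ∞) ≠ ⊤)).mp h4
  · -- k odd: geometric sum is odd
    have hfac : k.factorization 2 = 0 :=
      Nat.factorization_eq_zero_of_not_dvd (by rcases hko with ⟨j,hj⟩; omega : ¬ 2 ∣ k)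
    rw [hfac, Nat.sub_zero]
    have hgeom := geom_sum₂_mul (t:ℤ) (t₀:ℤ) k
    have hS : ¬ (2:ℤ) ∣ (∑ i ∈ Finset.range k, (t:ℤ)^i * (t₀:ℤ)^(k-1-i)) := by
      intro hdvd2
      rw [show (2:ℤ) = ((2:ℕ):ℤ) by norm_cast, ← ZMod.intCast_zmod_eq_zero_iff_dvd _ 2] at hdvd2
      push_cast at hdvd2
      have ht1 : ((t:ℕ) : ZMod 2) = 1 := by
        have hm : t % 2 = 1 := by omega
        rw [← ZMod.natCast_mod t 2, hm, Nat.cast_one]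
      have ht01 : ((t₀:ℕ) : ZMod 2) = 1 := by
        have hm : t₀ % 2 = 1 := by omega
        rw [← ZMod.natCast_mod t₀ 2, hm, Nat.cast_one]
      rw [ht1, ht01] at hdvd2
      simp only [one_pow, mul_one, Finset.sum_const, Finset.card_range, nsmul_eq_mul,
        mul_one] at hdvd2
      have : (k : ZMod 2) ≠ 0 := by
        rw [Ne, ZMod.natCast_eq_zero_iff]
        rcases hko with ⟨j,hj⟩; omega
      exact this hdvd2
    have hdvd' : (2:ℤ)^l ∣ (∑ i ∈ Finset.range k, (t:ℤ)^i * (t₀:ℤ)^(k-1-i)) * ((t:ℤ) - (t₀:ℤ)) := by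
      rw [hgeom]; exact hdvd
    exact Int.prime_two.pow_dvd_of_dvd_mul_left l hS hdvd'






lemma card_le_of_fiber_image {β : Type} [DecidableEq β] (T : Finset ℕ) (f : ℕ → β)
    (d n B : ℕ) (hd : 0 < d) (hsub : T ⊆ Finset.Icc 1 (d*n))
    (hfib : ∀ t ∈ T, ∀ t₀ ∈ T, f t = f t₀ → (d:ℤ) ∣ (t:ℤ) - (t₀:ℤ))
    (himg : (T.image f).card ≤ B) : T.card ≤ n * B := by
  have h1 : T.card ≤ n * (T.image f).card := by
    apply Finset.card_le_mul_card_image T n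
    intro b hb
    obtain ⟨t₀, ht₀, hft₀⟩ := Finset.mem_image.mp hb
    have hsub2 : T.filter (fun t => f t = b) ⊆
        (Finset.Icc 1 (d*n)).filter (fun t : ℕ => (d:ℤ) ∣ (t:ℤ) - (t₀:ℤ)) := by
      intro t ht
      rw [Finset.mem_filter] at ht ⊢
      exact ⟨hsub ht.1, hfib t ht.1 t₀ ht₀ (by rw [ht.2, hft₀])⟩
    exact le_trans (Finset.card_le_card hsub2) (ap_count d n _ hd)
  exact le_trans h1 (Nat.mul_le_mul_left n himg)

-- bound on card T, the set of units t in [1, p^(h-a)] with t^k ≡ s^k mod p^l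
lemma T_count (p k l m : ℕ) (hp : p.Prime) (hk : 2 ≤ k) (hl : 1 ≤ l) (hlm : l ≤ m)
    (s : ℕ) :
    ((Finset.Icc 1 (p^m)).filter
        (fun t : ℕ => ¬ p ∣ t ∧ (p:ℤ)^l ∣ (t:ℤ)^k - (s:ℤ)^k)).card
      ≤ 2 * k * p^(m - l + k.factorization p) := by
  haveI : Fact p.Prime := ⟨hp⟩
  have hp1 : 1 < p := hp.one_lt
  set a' := k.factorization p with ha'
  set T := ((Finset.Icc 1 (p^m)).filter
      (fun t : ℕ => ¬ p ∣ t ∧ (p:ℤ)^l ∣ (t:ℤ)^k - (s:ℤ)^k)) with hT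
  -- trivial case : l ≤ a'
  by_cases hla : l ≤ a'
  · calc T.card ≤ (Finset.Icc 1 (p^m)).card := Finset.card_le_card (Finset.filter_subset _ _)
      _ = p^m := by rw [Nat.card_Icc]; omega
      _ = p^(m-l) * p^l := by rw [← pow_add]; congr 1; omega
      _ ≤ p^(m-l) * p^a' := by
          exact Nat.mul_le_mul_left _ (Nat.pow_le_pow_right (by omega) hla)
      _ ≤ p^(m-l+a') := by rw [pow_add]
      _ ≤ 2 * k * p^(m - l + a') := by
          have : 1 ≤ 2 * k := by omega
          nlinarith [Nat.pow_pos (n := m-l+a') (by omega : 0 < p)]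
  · push_neg at hla
    have he : l - a' + (m - l + a') = m := by omega
    have hd0 : 0 < p^(l-a') := Nat.pow_pos (by omega)
    have hmeq : p^(l-a') * p^(m-l+a') = p^m := by rw [← pow_add, he]
    have hcast : ((p^(l-a') : ℕ) : ℤ) = (p:ℤ)^(l-a') := by push_cast; ring
    rcases hp.eq_two_or_odd' with hp2 | hodd
    · -- p = 2 : image in ZMod 4
      subst hp2
      have := card_le_of_fiber_image T (fun t : ℕ => (t : ZMod 4)) (2^(l-a'))
        (2^(m-l+a')) 2 hd0 (by rw [hmeq]; exact Finset.filter_subset _ _)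
        ?_ ?_
      · calc T.card ≤ 2^(m-l+a') * 2 := this
          _ ≤ 2 * k * 2^(m-l+a') := by nlinarith [Nat.pow_pos (n := m-l+a') (by omega : 0 < 2)]
      · intro t ht t₀ ht₀ hf
        rw [hT, Finset.mem_filter] at ht ht₀
        have hcong : (4:ℤ) ∣ (t:ℤ) - (t₀:ℤ) := by
          have : t ≡ t₀ [MOD 4] := (ZMod.natCast_eq_natCast_iff _ _ _).mp hf
          have := this.dvd
          omega
        have hdvd : (2:ℤ)^l ∣ (t:ℤ)^k - (t₀:ℤ)^k := by
          have h1 := ht.2.2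
          have h2 := ht₀.2.2
          have : (2:ℤ)^l ∣ ((t:ℤ)^k - (s:ℤ)^k) - ((t₀:ℤ)^k - (s:ℤ)^k) := dvd_sub h1 h2
          simpa using this
        have := lift_uniq_two k l (by omega) ht.2.1 ht₀.2.1 hcong hdvd
        rw [hcast]
        exact this
      · -- image has at most 2 elements
        have : T.image (fun t : ℕ => (t : ZMod 4)) ⊆ ({1, 3} : Finset (ZMod 4)) := by
          intro b hb
          obtain ⟨t, ht, hft⟩ := Finset.mem_image.mp hb
          rw [hT, Finset.mem_filter] at ht
          have hodd : t % 2 = 1 := Nat.odd_iff.mp (Nat.odd_iff.mpr (by omega))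
          have h4 : t % 4 = 1 ∨ t % 4 = 3 := by omega
          rw [← hft, ← ZMod.natCast_mod t 4]
          rcases h4 with h | h <;> rw [h] <;> simp [Finset.mem_insert]
        calc (T.image _).card ≤ ({1, 3} : Finset (ZMod 4)).card := Finset.card_le_card this
          _ ≤ 2 := Finset.card_insert_le _ _ |>.trans (by simp)
    · -- p odd : image in ZMod p, roots of X^k - s^k
      have := card_le_of_fiber_image T (fun t : ℕ => (t : ZMod p)) (p^(l-a'))
        (p^(m-l+a')) k hd0 (by rw [hmeq]; exact Finset.filter_subset _ _)
        ?_ ?_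
      · calc T.card ≤ p^(m-l+a') * k := this
          _ ≤ p^(m-l+a') * k * 2 := Nat.le_mul_of_pos_right _ (by omega)
          _ = 2 * k * p^(m-l+a') := by ring
      · intro t ht t₀ ht₀ hf
        rw [hT, Finset.mem_filter] at ht ht₀
        have hcong : (p:ℤ) ∣ (t:ℤ) - (t₀:ℤ) := by
          have ht2 : t ≡ t₀ [MOD p] := (ZMod.natCast_eq_natCast_iff _ _ _).mp hf
          exact ht2.symm.dvd
        have hdvd : (p:ℤ)^l ∣ (t:ℤ)^k - (t₀:ℤ)^k := by
          have : (p:ℤ)^l ∣ ((t:ℤ)^k - (s:ℤ)^k) - ((t₀:ℤ)^k - (s:ℤ)^k) :=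
            dvd_sub ht.2.2 ht₀.2.2
          simpa using this
        have := lift_uniq_odd p k l hp hodd (by omega) ht.2.1 hcong hdvd
        rw [hcast]
        exact this
      · -- image contained in k-th roots of s^k in the field ZMod p
        have hsub3 : T.image (fun t : ℕ => (t : ZMod p)) ⊆
            (Polynomial.nthRoots k (((s : ZMod p))^k)).toFinset := by
          intro b hb
          obtain ⟨t, ht, hft⟩ := Finset.mem_image.mp hb
          rw [hT, Finset.mem_filter] at ht
          rw [Multiset.mem_toFinset, Polynomial.mem_nthRoots (by omega : 0 < k)]
          have h1 : (p:ℤ) ∣ (t:ℤ)^k - (s:ℤ)^k :=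
            dvd_trans (dvd_pow_self (p:ℤ) (by omega : l ≠ 0)) ht.2.2
          have h2 : ((((t:ℤ)^k - (s:ℤ)^k : ℤ)) : ZMod p) = 0 := by
            rw [ZMod.intCast_zmod_eq_zero_iff_dvd]
            exact_mod_cast h1
          push_cast at h2
          rw [← hft]
          linear_combination h2
        calc (T.image _).card ≤ _ := Finset.card_le_card hsub3
          _ ≤ Multiset.card (Polynomial.nthRoots k (((s : ZMod p))^k)) :=
              Multiset.toFinset_card_le _
          _ ≤ k := Polynomial.card_nthRoots k _

lemma key_count (p k h a : ℕ) (hp : p.Prime) (hk : 2 ≤ k)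
    (ha : k*a + 1 ≤ h) (x : ℕ) (hx1 : 1 ≤ x) (hxa : x.factorization p = a) :
    ((Finset.Icc 1 (p^h)).filter
        (fun y : ℕ => ((y : ZMod (p^h)))^k = ((x : ZMod (p^h)))^k)).card
      ≤ 2*k^2 * p^((k-1)*a) := by
  haveI : Fact p.Prime := ⟨hp⟩
  have hp1 : 1 < p := hp.one_lt
  set l := h - k*a with hldef
  have hl : 1 ≤ l := by omega
  have hlh : k*a + l = h := by omega
  have hka : a ≤ k*a := Nat.le_mul_of_pos_left a (by omega)
  have hpa_dvd : p^a ∣ x := by rw [← hxa]; exact Nat.ordProj_dvd x p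
  set s := x / p^a with hsdef
  have hxs : x = p^a * s := by rw [hsdef, Nat.mul_div_cancel' hpa_dvd]
  have hs0 : s ≠ 0 := by
    intro h0; rw [h0, Nat.mul_zero] at hxs; omega
  have hps : ¬ p ∣ s := by
    intro hdvd
    have : p^(a+1) ∣ x := by
      obtain ⟨c, hc⟩ := hdvd
      exact ⟨c, by rw [hxs, hc, pow_succ]; ring⟩
    exact Nat.pow_succ_factorization_not_dvd (by omega) hp (hxa ▸ this)
  set Y := ((Finset.Icc 1 (p^h)).filter
      (fun y : ℕ => ((y : ZMod (p^h)))^k = ((x : ZMod (p^h)))^k)) with hYdef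
  set T := ((Finset.Icc 1 (p^(h-a))).filter
      (fun t : ℕ => ¬ p ∣ t ∧ (p:ℤ)^l ∣ (t:ℤ)^k - (s:ℤ)^k)) with hTdef
  -- main facts about elements of Y
  have hkey : ∀ y ∈ Y, p^a ∣ y ∧ (y / p^a) ∈ T := by
    intro y hy
    rw [hYdef, Finset.mem_filter, Finset.mem_Icc] at hy
    obtain ⟨⟨hy1, hy2⟩, hyc⟩ := hy
    have hy0 : y ≠ 0 := by omega
    -- integer divisibility from the ZMod equation
    have h1 : ((y^k : ℕ) : ZMod (p^h)) = ((x^k : ℕ) : ZMod (p^h)) := by push_cast; exact hyc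
    have h2 : y^k ≡ x^k [MOD p^h] := (ZMod.natCast_eq_natCast_iff _ _ _).mp h1
    have hq : ((p^h : ℕ):ℤ) ∣ (y:ℤ)^k - (x:ℤ)^k := by
      have := h2.symm.dvd
      push_cast at this ⊢
      exact this
    have hq' : (p:ℤ)^h ∣ (y:ℤ)^k - (x:ℤ)^k := by
      push_cast at hq; exact hq
    -- valuation of x^k
    have hx0 : x^k ≠ 0 := pow_ne_zero _ (by omega)
    have hyk0 : y^k ≠ 0 := pow_ne_zero _ hy0
    have hxk : (x^k).factorization p = k*a := by
      rw [Nat.factorization_pow, Finsupp.smul_apply, hxa, smul_eq_mul]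
    have hdxk : (p:ℤ)^(k*a) ∣ (x:ℤ)^k := by
      have : p^(k*a) ∣ x^k := (Nat.Prime.pow_dvd_iff_le_factorization hp hx0).mpr (by omega)
      exact_mod_cast this
    have hndx : ¬ (p:ℤ)^(k*a+1) ∣ (x:ℤ)^k := by
      intro hc
      have : p^(k*a+1) ∣ x^k := by exact_mod_cast hc
      rw [Nat.Prime.pow_dvd_iff_le_factorization hp hx0] at this
      omega
    -- valuation of y
    have hyka : (p:ℤ)^(k*a) ∣ (y:ℤ)^k := by
      have hd1 : (p:ℤ)^(k*a) ∣ (y:ℤ)^k - (x:ℤ)^k :=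
        dvd_trans (pow_dvd_pow _ (by omega)) hq'
      have := dvd_add hd1 hdxk
      simpa using this
    have hnyk : ¬ (p:ℤ)^(k*a+1) ∣ (y:ℤ)^k := by
      intro hc
      have hd1 : (p:ℤ)^(k*a+1) ∣ (y:ℤ)^k - (x:ℤ)^k :=
        dvd_trans (pow_dvd_pow _ (by omega)) hq'
      have := dvd_sub hc hd1
      simp only [sub_sub_cancel] at this
      exact hndx this
    have hyv : y.factorization p = a := by
      have hge : k*a ≤ (y^k).factorization p := by
        rw [← Nat.Prime.pow_dvd_iff_le_factorization hp hyk0]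
        exact_mod_cast hyka
      have hlt : ¬ (k*a + 1 ≤ (y^k).factorization p) := by
        rw [← Nat.Prime.pow_dvd_iff_le_factorization hp hyk0]
        intro hc
        exact hnyk (by exact_mod_cast hc)
      have hfp : (y^k).factorization p = k * (y.factorization p) := by
        rw [Nat.factorization_pow, Finsupp.smul_apply, smul_eq_mul]
      have : k * (y.factorization p) = k * a := by omega
      exact Nat.eq_of_mul_eq_mul_left (by omega) this
    have hpay : p^a ∣ y := by rw [← hyv]; exact Nat.ordProj_dvd y p
    refine ⟨hpay, ?_⟩
    set t := y / p^a with htdef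
    have hyt : y = p^a * t := by rw [htdef, Nat.mul_div_cancel' hpay]
    have hpt : ¬ p ∣ t := by
      intro hdvd
      have : p^(a+1) ∣ y := by
        obtain ⟨c, hc⟩ := hdvd
        exact ⟨c, by rw [hyt, hc, pow_succ]; ring⟩
      exact Nat.pow_succ_factorization_not_dvd hy0 hp (hyv ▸ this)
    have ht1 : 1 ≤ t := by
      rcases Nat.eq_zero_or_pos t with h0 | h1
      · rw [h0, Nat.mul_zero] at hyt; omega
      · exact h1
    have ht2 : t ≤ p^(h-a) := by
      have hle : p^a * t ≤ p^a * p^(h-a) := by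
        rw [← hyt, ← pow_add, show a + (h-a) = h by omega]; exact hy2
      exact Nat.le_of_mul_le_mul_left hle (by positivity)
    rw [hTdef, Finset.mem_filter, Finset.mem_Icc]
    refine ⟨⟨ht1, ht2⟩, hpt, ?_⟩
    -- cancel p^(k*a)
    have hYX : (y:ℤ)^k - (x:ℤ)^k = (p:ℤ)^(k*a) * ((t:ℤ)^k - (s:ℤ)^k) := by
      have hyZ : (y:ℤ) = (p:ℤ)^a * (t:ℤ) := by exact_mod_cast congrArg (Nat.cast : ℕ → ℤ) hyt
      have hxZ : (x:ℤ) = (p:ℤ)^a * (s:ℤ) := by exact_mod_cast congrArg (Nat.cast : ℕ → ℤ) hxs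
      rw [hyZ, hxZ, mul_pow, mul_pow, ← pow_mul, mul_comm a k]
      ring
    have hq2 : (p:ℤ)^(k*a) * (p:ℤ)^l ∣ (p:ℤ)^(k*a) * ((t:ℤ)^k - (s:ℤ)^k) := by
      rw [← pow_add, hlh, ← hYX]; exact hq'
    exact (mul_dvd_mul_iff_left (pow_ne_zero _ (by exact_mod_cast (by omega : p ≠ 0)))).mp hq2
  -- injection
  have hinj : Y.card ≤ T.card := by
    apply Finset.card_le_card_of_injOn (fun y => y / p^a)
    · intro y hy; exact (hkey y hy).2
    · intro y hy y' hy' hq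
      simp only [] at hq
      have h1 := Nat.mul_div_cancel' (hkey y hy).1
      have h2 := Nat.mul_div_cancel' (hkey y' hy').1
      rw [← h1, ← h2, hq]
  -- bound card T
  have hTb : T.card ≤ 2*k*p^((k-1)*a + k.factorization p) := by
    have := T_count p k l (h-a) hp hk hl (by omega) s
    have heq : (h-a) - l + k.factorization p = (k-1)*a + k.factorization p := by
      have e2 : (k-1)*a + a = k*a := by
        have : (k-1) + 1 = k := by omega
        calc (k-1)*a + a = ((k-1)+1)*a := by ring
          _ = k*a := by rw [this]
      omega
    rw [heq] at this
    exact this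
  have hpk : p^(k.factorization p) ≤ k := Nat.le_of_dvd (by omega) (Nat.ordProj_dvd k p)
  calc Y.card ≤ T.card := hinj
    _ ≤ 2*k*p^((k-1)*a + k.factorization p) := hTb
    _ = 2*k*(p^((k-1)*a) * p^(k.factorization p)) := by rw [pow_add]
    _ ≤ 2*k*(p^((k-1)*a) * k) := by
        exact Nat.mul_le_mul_left _ (Nat.mul_le_mul_left _ hpk)
    _ = 2*k^2 * p^((k-1)*a) := by ring





-- the main natural-number bound
lemma main_nat (p k h u v : ℕ) (hp : p.Prime) (hk : 2 ≤ k) (hv1 : 1 ≤ v) (hvk : v ≤ k)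
    (hhuv : h = u*k + v) :
    ((Finset.Icc 1 (p^h) ×ˢ Finset.Icc 1 (p^h)).filter
      (fun z => ((z.1 : ZMod (p^h))) ^ k = ((z.2 : ZMod (p^h))) ^ k)).card
    ≤ (u+1) * (2*k^2 * p^(h + (k-2)*u)) + p^(h-(u+1)) * p^(h-(u+1)) := by
  haveI : Fact p.Prime := ⟨hp⟩
  have hp1 : 1 < p := hp.one_lt
  have hku : u ≤ u*k := Nat.le_mul_of_pos_right u (by omega)
  have hku2 : 2*u ≤ u*k := by
    calc 2*u = u*2 := by ring
      _ ≤ u*k := Nat.mul_le_mul_left u hk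
  set q := p^h with hq
  set S := ((Finset.Icc 1 q ×ˢ Finset.Icc 1 q).filter
      (fun z => ((z.1 : ZMod q)) ^ k = ((z.2 : ZMod q)) ^ k)) with hS
  set m := u + 1 with hm
  have hmh : m ≤ h := by omega
  have hkm : h ≤ m*k := by
    have : m*k = u*k + k := by rw [hm]; ring
    omega
  classical
  have hsplit := Finset.card_filter_add_card_filter_not
    (s := S) (p := fun z => p^m ∣ z.1)
  -- Part B
  have hB : (S.filter (fun z => p^m ∣ z.1)).card ≤ p^(h-m) * p^(h-m) := by
    set Bf := ((Finset.Icc 1 q).filter (fun y : ℕ => ((p^m : ℕ):ℤ) ∣ (y:ℤ) - (0:ℤ))) with hBf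
    have hsub : S.filter (fun z => p^m ∣ z.1) ⊆ Bf ×ˢ Bf := by
      intro z hz
      rw [Finset.mem_filter, hS, Finset.mem_filter, Finset.mem_product] at hz
      obtain ⟨⟨⟨hz1, hz2⟩, hzc⟩, hzd⟩ := hz
      rw [Finset.mem_Icc] at hz1 hz2
      have hz20 : z.2 ≠ 0 := by omega
      -- p^m divides z.2 as well
      have hd2 : p^m ∣ z.2 := by
        have h1 : q ∣ z.1^k := by
          refine dvd_trans ?_ (pow_dvd_pow_of_dvd hzd k)
          rw [← pow_mul]
          exact pow_dvd_pow p hkm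
        have h2 : ((z.1^k : ℕ) : ZMod q) = 0 := by
          rw [ZMod.natCast_eq_zero_iff]; exact h1
        have h3 : ((z.2^k : ℕ) : ZMod q) = 0 := by
          push_cast at h2 ⊢
          rw [← hzc]; exact h2
        have h4 : q ∣ z.2^k := by
          rwa [ZMod.natCast_eq_zero_iff] at h3
        have h5 : h ≤ k * (z.2.factorization p) := by
          have h6 : (z.2^k).factorization p = k * (z.2.factorization p) := by
            rw [Nat.factorization_pow, Finsupp.smul_apply, smul_eq_mul]
          have h7 : p^h ∣ z.2^k := h4
          rw [Nat.Prime.pow_dvd_iff_le_factorization hp (pow_ne_zero _ hz20)] at h7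
          omega
        have h8 : m ≤ z.2.factorization p := by
          by_contra hcon
          push_neg at hcon
          have : k * z.2.factorization p ≤ k*u := Nat.mul_le_mul_left k (by omega)
          have hkuu : k*u = u*k := by ring
          omega
        exact dvd_trans (pow_dvd_pow p h8) (Nat.ordProj_dvd z.2 p)
      rw [Finset.mem_product, hBf, Finset.mem_filter, Finset.mem_filter]
      constructor
      · refine ⟨Finset.mem_Icc.mpr hz1, ?_⟩
        rw [sub_zero]
        exact_mod_cast Int.natCast_dvd_natCast.mpr hzd
      · refine ⟨Finset.mem_Icc.mpr hz2, ?_⟩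
        rw [sub_zero]
        exact_mod_cast Int.natCast_dvd_natCast.mpr hd2
    calc (S.filter (fun z => p^m ∣ z.1)).card ≤ (Bf ×ˢ Bf).card := Finset.card_le_card hsub
      _ = Bf.card * Bf.card := Finset.card_product _ _
      _ ≤ p^(h-m) * p^(h-m) := by
          have hBc : Bf.card ≤ p^(h-m) := by
            have hqeq : q = p^m * p^(h-m) := by
              rw [← pow_add, show m + (h-m) = h from by omega]
            rw [hBf, hqeq]
            exact ap_count (p^m) (p^(h-m)) 0 (by positivity)
          exact Nat.mul_le_mul hBc hBc
  -- Part A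
  have hA : (S.filter (fun z => ¬ p^m ∣ z.1)).card ≤ m * (2*k^2 * p^(h + (k-2)*u)) := by
    have hsub : S.filter (fun z => ¬ p^m ∣ z.1) ⊆
        (Finset.range m).biUnion (fun a => S.filter (fun z => z.1.factorization p = a)) := by
      intro z hz
      rw [Finset.mem_filter] at hz
      obtain ⟨hzS, hzn⟩ := hz
      have hz1 : 1 ≤ z.1 := by
        rw [hS, Finset.mem_filter, Finset.mem_product] at hzS
        exact (Finset.mem_Icc.mp hzS.1.1).1
      rw [Finset.mem_biUnion]
      refine ⟨z.1.factorization p, ?_, ?_⟩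
      · rw [Finset.mem_range]
        by_contra hcon
        push_neg at hcon
        exact hzn (dvd_trans (pow_dvd_pow p hcon) (Nat.ordProj_dvd z.1 p))
      · rw [Finset.mem_filter]; exact ⟨hzS, rfl⟩
    have hper : ∀ a ∈ Finset.range m,
        (S.filter (fun z => z.1.factorization p = a)).card ≤ 2*k^2 * p^(h + (k-2)*u) := by
      intro a haa
      rw [Finset.mem_range] at haa
      have hau : a ≤ u := by omega
      have hkah : k*a + 1 ≤ h := by
        have : k*a ≤ k*u := Nat.mul_le_mul_left k hau
        have hkuu : k*u = u*k := by ring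
        omega
      set t := (Finset.Icc 1 q).filter (fun y : ℕ => ((p^a : ℕ):ℤ) ∣ (y:ℤ) - (0:ℤ)) with htdef
      have hmaps : ∀ z ∈ S.filter (fun z => z.1.factorization p = a),
          (fun z : ℕ × ℕ => z.1) z ∈ t := by
        intro z hz
        rw [Finset.mem_filter] at hz
        obtain ⟨hzS, hza⟩ := hz
        rw [hS, Finset.mem_filter, Finset.mem_product] at hzS
        rw [htdef, Finset.mem_filter]
        refine ⟨hzS.1.1, ?_⟩
        rw [sub_zero]
        exact_mod_cast Int.natCast_dvd_natCast.mpr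
          (hza ▸ Nat.ordProj_dvd z.1 p)
      have hfib : ∀ x ∈ t,
          ((S.filter (fun z => z.1.factorization p = a)).filter
            (fun z => (fun z : ℕ × ℕ => z.1) z = x)).card ≤ 2*k^2 * p^((k-1)*a) := by
        intro x hx
        rcases Finset.eq_empty_or_nonempty
            ((S.filter (fun z => z.1.factorization p = a)).filter
              (fun z => (fun z : ℕ × ℕ => z.1) z = x)) with hemp | ⟨z₀, hz₀⟩
        · rw [hemp]; simp
        · rw [Finset.mem_filter, Finset.mem_filter] at hz₀
          have hxa : x.factorization p = a := by
            rw [← (show z₀.1 = x from hz₀.2)]; exact hz₀.1.2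
          have hx1 : 1 ≤ x := by
            rw [htdef, Finset.mem_filter, Finset.mem_Icc] at hx
            exact hx.1.1
          have hcount := key_count p k h a hp hk hkah x hx1 hxa
          refine le_trans ?_ hcount
          apply Finset.card_le_card_of_injOn (fun z : ℕ × ℕ => z.2)
          · intro z hz
            rw [Finset.mem_coe, Finset.mem_filter, Finset.mem_filter] at hz
            obtain ⟨⟨hzS, hza⟩, hzx⟩ := hz
            rw [hS, Finset.mem_filter, Finset.mem_product] at hzS
            rw [Finset.mem_coe, Finset.mem_filter]
            refine ⟨hzS.1.2, ?_⟩
            rw [← hzS.2, (show z.1 = x from hzx)]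
          · intro z hz z' hz' hq2
            simp only [Finset.mem_coe, Finset.mem_filter] at hz hz'
            have : z.1 = z'.1 := by rw [hz.2, hz'.2]
            exact Prod.ext this hq2
      have h1 := Finset.card_le_mul_card_image_of_maps_to hmaps (2*k^2 * p^((k-1)*a)) hfib
      have h2 : t.card ≤ p^(h-a) := by
        have hqeq : q = p^a * p^(h-a) := by
          rw [← pow_add, show a + (h-a) = h from by omega]
        rw [htdef, hqeq]
        exact ap_count (p^a) (p^(h-a)) 0 (by positivity)
      have h3 : (k-1)*a + (h-a) = h + (k-2)*a := by
        have c1 : (k-2)*a + 2*a = k*a := by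
          calc (k-2)*a + 2*a = ((k-2)+2)*a := by ring
            _ = k*a := by rw [show k-2+2 = k from by omega]
        have c2 : (k-1)*a + a = k*a := by
          calc (k-1)*a + a = ((k-1)+1)*a := by ring
            _ = k*a := by rw [show k-1+1 = k from by omega]
        omega
      have h4 : (k-2)*a ≤ (k-2)*u := Nat.mul_le_mul_left _ hau
      calc (S.filter (fun z => z.1.factorization p = a)).card
          ≤ 2*k^2 * p^((k-1)*a) * t.card := h1
        _ ≤ 2*k^2 * p^((k-1)*a) * p^(h-a) := Nat.mul_le_mul_left _ h2
        _ = 2*k^2 * p^((k-1)*a + (h-a)) := by rw [pow_add]; ring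
        _ = 2*k^2 * p^(h + (k-2)*a) := by rw [h3]
        _ ≤ 2*k^2 * p^(h + (k-2)*u) := by
            exact Nat.mul_le_mul_left _ (Nat.pow_le_pow_right (by omega) (by omega))
    calc (S.filter (fun z => ¬ p^m ∣ z.1)).card
        ≤ ((Finset.range m).biUnion (fun a => S.filter (fun z => z.1.factorization p = a))).card :=
          Finset.card_le_card hsub
      _ ≤ ∑ a ∈ Finset.range m, (S.filter (fun z => z.1.factorization p = a)).card :=
          Finset.card_biUnion_le
      _ ≤ ∑ _a ∈ Finset.range m, (2*k^2 * p^(h + (k-2)*u)) := Finset.sum_le_sum hper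
      _ = m * (2*k^2 * p^(h + (k-2)*u)) := by
          rw [Finset.sum_const, Finset.card_range, smul_eq_mul]
  have hfin : S.card ≤ p^(h-m) * p^(h-m) + m * (2*k^2 * p^(h + (k-2)*u)) := by
    rw [← hsplit]; exact add_le_add hB hA
  rw [hm] at hfin
  omega




theorem stmt_11 (k : ℕ) (hk : 2 ≤ k) (p : ℕ) (hp : p.Prime) (h : ℕ) (hh : 1 ≤ h)
    (ρ : ℕ → ℕ)
    (hρ : ∀ d : ℕ, ρ d = ((Finset.Icc 1 d ×ˢ Finset.Icc 1 d).filter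
      (fun q => ((q.1 : ZMod d)) ^ k = ((q.2 : ZMod d)) ^ k)).card)
    (w : ℕ → ℝ)
    (hw1 : ∀ u : ℕ, w (p ^ (u * k + 1)) = (k : ℝ) * (p : ℝ) ^ (-(u : ℝ) - 1 / 2))
    (hw2 : ∀ u v : ℕ, 2 ≤ v → v ≤ k → w (p ^ (u * k + v)) = (p : ℝ) ^ (-(u : ℝ) - 1))
    (hS : ∀ (l : ℕ) (c : ℕ), 1 ≤ l → Nat.Coprime c p →
      ‖∑ r ∈ Finset.Icc 1 (p ^ l),
          Complex.exp (2 * π * Complex.I * (c : ℝ) * (r : ℝ) ^ k / ((p : ℝ) ^ l))‖ ≤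
        (k : ℝ) * (p : ℝ) ^ l * w (p ^ l)) :
    (ρ (p ^ h) : ℝ) ≤ (k : ℝ) ^ 2 * ((h : ℝ) + 1) * (p : ℝ) ^ (2 * h) * (w (p ^ h)) ^ 2 := by
  have hu := Nat.div_add_mod (h-1) k
  set u := (h-1)/k with hudef
  set v := h - u*k with hvdef
  have hmlt : (h-1) % k < k := Nat.mod_lt _ (by omega)
  have hcomm : k*u = u*k := Nat.mul_comm k u
  have hv1 : 1 ≤ v := by omega
  have hvk : v ≤ k := by omega
  have hhuv : h = u*k + v := by omega
  have hu2k : 2*u ≤ u*k := by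
    calc 2*u = u*2 := by ring
      _ ≤ u*k := Nat.mul_le_mul_left u hk
  have hmain := main_nat p k h u v hp hk hv1 hvk hhuv
  have hP0 : (0:ℝ) < (p:ℝ) := by exact_mod_cast hp.pos
  have hp1 : 1 < p := hp.one_lt
  have hc1 : (k-2)*u + 2*u = k*u := by
    calc (k-2)*u + 2*u = ((k-2)+2)*u := by ring
      _ = k*u := by rw [show k-2+2 = k from by omega]
  rw [hρ]
  rcases eq_or_lt_of_le hv1 with hveq | hv2
  · -- v = 1
    have hh1 : h = u*k + 1 := by omega
    have hwval : w (p^h) = (k:ℝ) * (p:ℝ) ^ (-(u:ℝ) - 1/2) := by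
      rw [show p^h = p^(u*k+1) from by rw [← hh1]]
      exact hw1 u
    have hu2 : 2*u + 1 ≤ h := by omega
    set E := 2*h - (2*u+1) with hEdef
    have hexp1 : h + (k-2)*u = E := by omega
    have hnat : (u+1) * (2*k^2 * p^(h + (k-2)*u)) + p^(h-(u+1)) * p^(h-(u+1))
        ≤ k^4*(h+1) * p^E := by
      have hb : p^(h-(u+1)) * p^(h-(u+1)) = p^((h-(u+1)) + (h-(u+1))) := (pow_add p _ _).symm
      have hble : p^((h-(u+1)) + (h-(u+1))) ≤ p^E :=
        Nat.pow_le_pow_right (by omega) (by omega)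
      have hcoef : (u+1)*(2*k^2) + 1 ≤ k^4*(h+1) := by
        have s1 : 2*(u+1) ≤ h+1 := by omega
        have s2 : (u+1)*(2*k^2) = k^2 * (2*(u+1)) := by ring
        have s3 : k^2*(2*(u+1)) ≤ k^2*(h+1) := Nat.mul_le_mul_left _ s1
        have s4 : 1 ≤ k^2*(h+1) := Nat.mul_pos (pow_pos (by omega) 2) (by omega)
        have s5 : 2*(k^2*(h+1)) ≤ k^2*(k^2*(h+1)) :=
          Nat.mul_le_mul_right _ (by nlinarith)
        have s6 : k^2*(k^2*(h+1)) = k^4*(h+1) := by ring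
        omega
      calc (u+1) * (2*k^2 * p^(h + (k-2)*u)) + p^(h-(u+1)) * p^(h-(u+1))
          = ((u+1)*(2*k^2)) * p^E + p^((h-(u+1)) + (h-(u+1))) := by
            rw [hexp1, hb]; ring
        _ ≤ ((u+1)*(2*k^2)) * p^E + p^E := by omega
        _ = ((u+1)*(2*k^2) + 1) * p^E := by ring
        _ ≤ (k^4*(h+1)) * p^E := Nat.mul_le_mul_right _ hcoef
    have hreal : (k:ℝ)^2 * ((h:ℝ)+1) * (p:ℝ)^(2*h) * (w (p^h))^2
        = (k:ℝ)^4 * ((h:ℝ)+1) * (p:ℝ)^E := by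
      rw [hwval, mul_pow]
      have hsq : ((p:ℝ) ^ (-(u:ℝ) - 1/2))^2 = (p:ℝ) ^ (-(2*(u:ℝ)) - 1) := by
        rw [← Real.rpow_natCast ((p:ℝ) ^ (-(u:ℝ)-1/2)) 2, ← Real.rpow_mul hP0.le]
        congr 1
        push_cast
        ring
      rw [hsq]
      have hcomb : (p:ℝ)^(2*h) * (p:ℝ) ^ (-(2*(u:ℝ))-1) = (p:ℝ)^E := by
        rw [← Real.rpow_natCast (p:ℝ) (2*h), ← Real.rpow_add hP0,
            ← Real.rpow_natCast (p:ℝ) E]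
        congr 1
        rw [hEdef, Nat.cast_sub (by omega : 2*u+1 ≤ 2*h)]
        push_cast; ring
      calc (k:ℝ)^2 * ((h:ℝ)+1) * (p:ℝ)^(2*h) * ((k:ℝ)^2 * ((p:ℝ)^(-(2*(u:ℝ))-1)))
          = (k:ℝ)^4 * ((h:ℝ)+1) * ((p:ℝ)^(2*h) * (p:ℝ)^(-(2*(u:ℝ))-1)) := by ring
        _ = _ := by rw [hcomb]
    rw [hreal]
    calc (((Finset.Icc 1 (p^h) ×ˢ Finset.Icc 1 (p^h)).filter
          (fun z => ((z.1 : ZMod (p^h))) ^ k = ((z.2 : ZMod (p^h))) ^ k)).card : ℝ)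
        ≤ ((k^4*(h+1) * p^E : ℕ) : ℝ) := by
          exact_mod_cast le_trans hmain hnat
      _ = (k:ℝ)^4 * ((h:ℝ)+1) * (p:ℝ)^E := by push_cast; ring
  · -- v ≥ 2
    have hwval : w (p^h) = (p:ℝ) ^ (-(u:ℝ) - 1) := by
      rw [show p^h = p^(u*k+v) from by rw [← hhuv]]
      exact hw2 u v hv2 hvk
    have hu2 : 2*u + 2 ≤ h := by omega
    set E := 2*h - (2*u+2) with hEdef
    have hnat : (u+1) * (2*k^2 * p^(h + (k-2)*u)) + p^(h-(u+1)) * p^(h-(u+1))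
        ≤ k^2*(h+1) * p^E := by
      have hexp1 : h + (k-2)*u ≤ E := by omega
      have ha : p^(h + (k-2)*u) ≤ p^E := Nat.pow_le_pow_right (by omega) hexp1
      have hb : p^(h-(u+1)) * p^(h-(u+1)) = p^E := by
        rw [← pow_add]; congr 1; omega
      have hcoef : (u+1)*(2*k^2) + 1 ≤ k^2*(h+1) := by
        have s1 : 2*(u+1) + 1 ≤ h+1 := by omega
        have s2 : (u+1)*(2*k^2) + 1 ≤ k^2 * (2*(u+1)) + k^2 := by
          have : (u+1)*(2*k^2) = k^2 * (2*(u+1)) := by ring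
          have hk2 : 1 ≤ k^2 := Nat.one_le_pow _ _ (by omega)
          omega
        have s3 : k^2*(2*(u+1)) + k^2 = k^2*(2*(u+1)+1) := by ring
        have s4 : k^2*(2*(u+1)+1) ≤ k^2*(h+1) := Nat.mul_le_mul_left _ s1
        omega
      calc (u+1) * (2*k^2 * p^(h + (k-2)*u)) + p^(h-(u+1)) * p^(h-(u+1))
          ≤ (u+1) * (2*k^2 * p^E) + p^E := by
            have t1 : (u+1) * (2*k^2 * p^(h + (k-2)*u)) ≤ (u+1) * (2*k^2 * p^E) :=
              Nat.mul_le_mul_left _ (Nat.mul_le_mul_left _ ha)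
            omega
        _ = ((u+1)*(2*k^2) + 1) * p^E := by ring
        _ ≤ (k^2*(h+1)) * p^E := Nat.mul_le_mul_right _ hcoef
    have hreal : (k:ℝ)^2 * ((h:ℝ)+1) * (p:ℝ)^(2*h) * (w (p^h))^2
        = (k:ℝ)^2 * ((h:ℝ)+1) * (p:ℝ)^E := by
      rw [hwval]
      have hsq : ((p:ℝ) ^ (-(u:ℝ) - 1))^2 = (p:ℝ) ^ (-(2*(u:ℝ)) - 2) := by
        rw [← Real.rpow_natCast ((p:ℝ) ^ (-(u:ℝ)-1)) 2, ← Real.rpow_mul hP0.le]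
        congr 1
        push_cast
        ring
      rw [hsq]
      have hcomb : (p:ℝ)^(2*h) * (p:ℝ) ^ (-(2*(u:ℝ))-2) = (p:ℝ)^E := by
        rw [← Real.rpow_natCast (p:ℝ) (2*h), ← Real.rpow_add hP0,
            ← Real.rpow_natCast (p:ℝ) E]
        congr 1
        rw [hEdef, Nat.cast_sub (by omega : 2*u+2 ≤ 2*h)]
        push_cast; ring
      calc (k:ℝ)^2 * ((h:ℝ)+1) * (p:ℝ)^(2*h) * ((p:ℝ)^(-(2*(u:ℝ))-2))
          = (k:ℝ)^2 * ((h:ℝ)+1) * ((p:ℝ)^(2*h) * (p:ℝ)^(-(2*(u:ℝ))-2)) := by ring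
        _ = _ := by rw [hcomb]
    rw [hreal]
    calc (((Finset.Icc 1 (p^h) ×ˢ Finset.Icc 1 (p^h)).filter
          (fun z => ((z.1 : ZMod (p^h))) ^ k = ((z.2 : ZMod (p^h))) ^ k)).card : ℝ)
        ≤ ((k^2*(h+1) * p^E : ℕ) : ℝ) := by
          exact_mod_cast le_trans hmain hnat
      _ = (k:ℝ)^2 * ((h:ℝ)+1) * (p:ℝ)^E := by push_cast; ring
end
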